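/- arXiv:1010.6139 — 6 statements merged into one kernel-verified Lean document; each statement's English description precedes it below -/
import Mathlib

section
/- Let G be a connected graph with girth 3, let C1 be a shortest cycle of G (a triangle), and let C2 be a shortest cycle among all cycles of G other than C1. If C1 and C2 share at least two vertices, then C1 and C2 share a common edge. -/
/-!
Suppose `C2` shares two vertices `x ≠ y` with the triangle `C1` but no edge. Then `s(x, y)` is a
chord of `C2`, cutting it into two paths which, closed up by that chord, are cycles whose lengths
sum to `C2.length + 2`. Each contains an edge of `C2`, hence none of `C1`, so both are cycles other
than `C1` and minimality makes each at least as long as `C2`, forcing `C2.length ≤ 2`.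
-/

namespace SimpleGraph.Walk

variable {V : Type*} {G : SimpleGraph V}

lemma mk_mem_edges_of_length_eq_three {u x y : V} {c : G.Walk u u} (hc : c.length = 3)
    (hx : x ∈ c.support) (hy : y ∈ c.support) (hxy : x ≠ y) : s(x, y) ∈ c.edges := by
  match c, hc with
  | .cons _ (.cons _ (.cons _ .nil)), _ =>
    simp only [support_cons, support_nil, List.mem_cons, List.not_mem_nil, or_false] at hx hy
    simp only [edges_cons, edges_nil, List.mem_cons, List.not_mem_nil, or_false]
    rcases hx with rfl | rfl | rfl | rfl <;> rcases hy with rfl | rfl | rfl | rfl <;>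
      simp_all [Sym2.eq_swap]

lemma IsCycle.exists_isCycle_pair_of_chord [DecidableEq V] {u x y : V} {c : G.Walk u u}
    (hc : c.IsCycle) (hx : x ∈ c.support) (hy : y ∈ c.support) (hxy : x ≠ y) (h : G.Adj x y)
    (hchord : s(x, y) ∉ c.edges) :
    ∃ (d₁ : G.Walk y y) (d₂ : G.Walk x x), d₁.IsCycle ∧ d₂.IsCycle ∧
      d₁.length + d₂.length = c.length + 2 ∧
      (∃ e ∈ d₁.edges, e ∈ c.edges) ∧ ∃ e ∈ d₂.edges, e ∈ c.edges := by
  set c' := c.rotate x hx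
  have hc' : c'.IsCycle := hc.rotate hx
  have hy' : y ∈ c'.support := (c.mem_support_rotate_iff x hx).2 hy
  set p := c'.takeUntil y hy'
  set q := c'.dropUntil y hy'
  have hsplit : p.append q = c' := c'.take_spec hy'
  have hp : p.IsPath := hc'.isPath_takeUntil hy'
  have hq : q.IsPath := (hsplit ▸ hc').isPath_of_append_right (not_nil_of_ne hxy)
  have hpe : p.edges ⊆ c.edges := fun e he =>
    (c.rotate_edges x hx).perm.mem_iff.1 (c'.edges_takeUntil_subset_edges hy' he)
  have hqe : q.edges ⊆ c.edges := fun e he =>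
    (c.rotate_edges x hx).perm.mem_iff.1 (c'.edges_dropUntil_subset_edges hy' he)
  have hlen : p.length + q.length = c.length := by
    rw [← length_append, hsplit, length_rotate]
  have hp₀ : s(x, p.snd) ∈ p.edges := mk_start_snd_mem_edges (not_nil_of_ne hxy)
  have hq₀ : s(y, q.snd) ∈ q.edges := mk_start_snd_mem_edges (not_nil_of_ne hxy.symm)
  refine ⟨cons h.symm p, cons h q, (cons_isCycle_iff _ _).2 ⟨hp, fun he => ?_⟩,
    (cons_isCycle_iff _ _).2 ⟨hq, fun he => hchord (hqe he)⟩,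
    by simp only [length_cons]; omega, ⟨_, .tail _ hp₀, hpe hp₀⟩, ⟨_, .tail _ hq₀, hqe hq₀⟩⟩
  exact hchord (Sym2.eq_swap ▸ hpe he)

end SimpleGraph.Walk

open SimpleGraph

theorem stmt_1_general {V : Type*} [DecidableEq V] (G : SimpleGraph V)
    {a b : V} (C1 : G.Walk a a) (C2 : G.Walk b b)
    (hC1len : C1.length = 3) (hC2 : C2.IsCycle)
    (hmin : ∀ ⦃w : V⦄ (D : G.Walk w w), D.IsCycle →
      D.edges.toFinset ≠ C1.edges.toFinset → C2.length ≤ D.length)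
    (hshare : ∃ x y : V, x ≠ y ∧ x ∈ C1.support ∧ x ∈ C2.support ∧
      y ∈ C1.support ∧ y ∈ C2.support) :
    ∃ e, e ∈ C1.edges ∧ e ∈ C2.edges := by
  by_contra! hdisj
  obtain ⟨x, y, hxy, hx1, hx2, hy1, hy2⟩ := hshare
  have hxyC1 : s(x, y) ∈ C1.edges := Walk.mk_mem_edges_of_length_eq_three hC1len hx1 hy1 hxy
  obtain ⟨d₁, d₂, hd₁, hd₂, hlen, ⟨e₁, he₁, he₁C2⟩, ⟨e₂, he₂, he₂C2⟩⟩ :=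
    hC2.exists_isCycle_pair_of_chord hx2 hy2 hxy (C1.adj_of_mem_edges hxyC1) (hdisj _ hxyC1)
  have hneC1 : ∀ ⦃w : V⦄ (D : G.Walk w w) e, e ∈ D.edges → e ∈ C2.edges →
      D.edges.toFinset ≠ C1.edges.toFinset := fun _ D e he heC2 hD =>
    hdisj e (by simpa [hD] using List.mem_toFinset.2 he) heC2
  have h₁ := hmin d₁ hd₁ (hneC1 d₁ e₁ he₁ he₁C2)
  have h₂ := hmin d₂ hd₂ (hneC1 d₂ e₂ he₂ he₂C2)
  have := hC2.three_le_length
  omega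

/-- Girth 3: if the second-shortest cycle shares two vertices with a shortest cycle
(a triangle), they share a common edge. -/
theorem stmt_1 {V : Type*} [DecidableEq V] (G : SimpleGraph V) (hG : G.Connected)
    (hgirth : G.girth = 3) {a b : V} (C1 : G.Walk a a) (C2 : G.Walk b b)
    (hC1 : C1.IsCycle) (hC1len : C1.length = 3) (hC2 : C2.IsCycle)
    (hne : C2.edges.toFinset ≠ C1.edges.toFinset)
    (hmin : ∀ ⦃w : V⦄ (D : G.Walk w w), D.IsCycle →
      D.edges.toFinset ≠ C1.edges.toFinset → C2.length ≤ D.length)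
    (hshare : ∃ x y : V, x ≠ y ∧ x ∈ C1.support ∧ x ∈ C2.support ∧
      y ∈ C1.support ∧ y ∈ C2.support) :
    ∃ e, e ∈ C1.edges ∧ e ∈ C2.edges :=
  stmt_1_general G C1 C2 hC1len hC2 hmin hshare
end

section
/- Let G be a connected graph with girth 5, let C1 be a shortest cycle of G, and let C2 be a shortest cycle among all cycles of G other than C1. If C1 and C2 share at least two vertices, then the edge intersection E(C1) ∩ E(C2) consists of exactly one edge or exactly two adjacent edges. -/
/-!
Write `L` for the length of `C2` and `S` for the set of common edges. Every vertex has even degree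
in the symmetric difference of the two edge sets, so it contains a cycle; when `S ≠ ∅` that cycle
misses `S`, hence differs from `C1`, and `L ≤ 5 + L - 2|S|`, i.e. `|S| ≤ 2`.

A path outside the edges of `C1` joining two distinct vertices `u, v` of `C1`, together with the
shorter arc of `C1` from `u` to `v` (of length `≤ 2`), contains a cycle other than `C1`; so such a
path has length `≥ L - 2`. If `S = ∅`, two common vertices cut `C2` into two such paths, so
`2L ≤ L + 4`, against girth `5`. If `S` consists of two disjoint edges, removing them cuts `C2`
into two such paths, so `2L ≤ (L - 2) + 4`, which is absurd.
-/

open SimpleGraph Finset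
open scoped symmDiff

namespace Finset

variable {α : Type*} [DecidableEq α]

lemma card_symmDiff_add_two_mul_card_inter (s t : Finset α) :
    #(s ∆ t) + 2 * #(s ∩ t) = #s + #t := by
  rw [symmDiff_eq_sup_sdiff_inf, sup_eq_union, inf_eq_inter,
    card_sdiff_of_subset inter_subset_union, ← card_union_add_card_inter s t]
  have := card_le_card (inter_subset_union (s := s) (t := t))
  omega

lemma even_card_filter_symmDiff (p : α → Prop) [DecidablePred p] {s t : Finset α}
    (hs : Even #{x ∈ s | p x}) (ht : Even #{x ∈ t | p x}) : Even #{x ∈ s ∆ t | p x} := by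
  have hfilter : {x ∈ s ∆ t | p x} = {x ∈ s | p x} ∆ {x ∈ t | p x} := by
    ext x
    simp only [mem_filter, mem_symmDiff]
    tauto
  have := card_symmDiff_add_two_mul_card_inter {x ∈ s | p x} {x ∈ t | p x}
  rw [hfilter, Nat.even_iff]
  rw [Nat.even_iff] at hs ht
  omega

end Finset

namespace SimpleGraph

variable {V : Type*} {G : SimpleGraph V}

namespace Walk

lemma exists_eq_append_cons_of_mem_darts {x y : V} {p : G.Walk x y} {d : G.Dart}
    (hd : d ∈ p.darts) :
    ∃ (q : G.Walk x d.fst) (r : G.Walk d.snd y), p = q.append (cons d.adj r) := by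
  induction p with
  | nil => simp at hd
  | cons h p ih =>
    rcases List.mem_cons.mp hd with rfl | hd
    · exact ⟨nil, p, rfl⟩
    · obtain ⟨q, r, rfl⟩ := ih hd
      exact ⟨cons h q, r, rfl⟩

lemma IsPath.eq_of_mem_edges_of_start_mem {u v w : V} {h : G.Adj u v} {p : G.Walk v w}
    (hp : (cons h p).IsPath) {e : Sym2 V} (he : e ∈ (cons h p).edges) (hu : u ∈ e) :
    e = s(u, v) := by
  rcases List.mem_cons.mp he with rfl | he
  · rfl
  · exact absurd (p.mem_support_of_mem_edges he hu) ((cons_isPath_iff h p).mp hp).2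

lemma IsPath.exists_split_of_mem_edges {x y : V} {p : G.Walk x y} (hp : p.IsPath)
    {f : Sym2 V} (hf : f ∈ p.edges) :
    ∃ (u v : V) (q : G.Walk x u) (r : G.Walk v y), f = s(u, v) ∧ q.IsPath ∧ r.IsPath ∧
      p.edges = q.edges ++ f :: r.edges := by
  obtain ⟨d, hd, rfl⟩ := List.mem_map.mp (p.edges_eq_map_darts ▸ hf)
  obtain ⟨q, r, rfl⟩ := exists_eq_append_cons_of_mem_darts hd
  exact ⟨d.fst, d.snd, q, r, rfl, hp.of_append_left,
    ((cons_isPath_iff _ _).mp hp.of_append_right).1, by rw [edges_append, edges_cons]; rfl⟩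

lemma IsCycle.exists_isPath_edges_perm {w : V} {c : G.Walk w w} (hc : c.IsCycle)
    {e : Sym2 V} (he : e ∈ c.edges) :
    ∃ (x y : V) (p : G.Walk y x), e = s(x, y) ∧ p.IsPath ∧ c.edges.Perm (e :: p.edges) := by
  obtain ⟨d, hd, rfl⟩ := List.mem_map.mp (c.edges_eq_map_darts ▸ he)
  obtain ⟨q, r, rfl⟩ := exists_eq_append_cons_of_mem_darts hd
  refine ⟨d.fst, d.snd, r.append q, rfl, ?_, ?_⟩
  · have hnodup := hc.support_nodup
    rw [tail_support_append, support_cons, List.tail_cons] at hnodup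
    rw [isPath_def, support_append]
    exact List.nodup_append_comm.mp hnodup
  · rw [edges_append, edges_cons, edges_append]
    exact List.perm_middle.trans (List.perm_append_comm.cons _)

lemma IsCycle.exists_split_of_mem_edges_of_mem_edges {w : V} {c : G.Walk w w} (hc : c.IsCycle)
    {e f : Sym2 V} (he : e ∈ c.edges) (hf : f ∈ c.edges) (hef : e ≠ f) :
    ∃ (x y u v : V) (q : G.Walk y u) (r : G.Walk v x), e = s(x, y) ∧ f = s(u, v) ∧
      q.IsPath ∧ r.IsPath ∧ c.edges.Perm (e :: f :: (q.edges ++ r.edges)) := by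
  obtain ⟨x, y, p, rfl, hp, hperm⟩ := hc.exists_isPath_edges_perm he
  have hfp : f ∈ p.edges := (List.mem_cons.mp (hperm.subset hf)).resolve_left hef.symm
  obtain ⟨u, v, q, r, rfl, hq, hr, hpqr⟩ := hp.exists_split_of_mem_edges hfp
  rw [hpqr] at hperm
  exact ⟨x, y, u, v, q, r, rfl, rfl, hq, hr, hperm.trans (List.perm_middle.cons _)⟩

variable [DecidableEq V]

lemma IsTrail.length_le_card {u v : V} {p : G.Walk u v} (hp : p.IsTrail)
    {s : Finset (Sym2 V)} (hs : ∀ e ∈ p.edges, e ∈ s) : p.length ≤ #s := by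
  rw [← length_edges, ← List.toFinset_card_of_nodup hp.edges_nodup]
  exact card_le_card fun e he => hs e (List.mem_toFinset.mp he)

lemma IsCycle.exists_isPath_of_mem_support {w x y : V} {c : G.Walk w w} (hc : c.IsCycle)
    (hx : x ∈ c.support) (hy : y ∈ c.support) (hxy : x ≠ y) :
    ∃ (p : G.Walk x y) (q : G.Walk y x), p.IsPath ∧ q.IsPath ∧
      c.edges.Perm (p.edges ++ q.edges) := by
  have hc' : (c.rotate x hx).IsCycle := hc.rotate hx
  have hy' : y ∈ (c.rotate x hx).support := (c.mem_support_rotate_iff x hx).mpr hy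
  have hsplit := (c.rotate x hx).take_spec hy'
  refine ⟨_, _, hc'.isPath_takeUntil hy',
    (hsplit ▸ hc').isPath_of_append_right (not_nil_of_ne hxy), ?_⟩
  rw [← edges_append, hsplit]
  exact (c.rotate_edges x hx).perm.symm

lemma IsCycle.exists_isPath_length_le_half {w x y : V} {c : G.Walk w w} (hc : c.IsCycle)
    (hx : x ∈ c.support) (hy : y ∈ c.support) (hxy : x ≠ y) :
    ∃ p : G.Walk x y, p.IsPath ∧ p.length ≤ c.length / 2 ∧ ∀ e ∈ p.edges, e ∈ c.edges := by
  obtain ⟨p, q, hp, hq, hperm⟩ := hc.exists_isPath_of_mem_support hx hy hxy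
  have hlen : p.length + q.length = c.length := by
    simpa [← length_edges] using hperm.length_eq.symm
  by_cases hshort : p.length ≤ c.length / 2
  · exact ⟨p, hp, hshort, fun e he => hperm.symm.subset (List.mem_append_left _ he)⟩
  · refine ⟨q.reverse, hq.reverse, by rw [length_reverse]; omega, fun e he => ?_⟩
    exact hperm.symm.subset (List.mem_append_right _ (by simpa using he))

lemma IsCycle.even_card_filter_mem {u : V} {c : G.Walk u u} (hc : c.IsCycle) (v : V) :
    Even #{e ∈ c.edges.toFinset | v ∈ e} := by
  have hfilter : {e ∈ c.edges.toFinset | v ∈ e} = (c.edges.filter (v ∈ ·)).toFinset := by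
    ext e
    simp
  rw [hfilter, List.toFinset_card_of_nodup (hc.edges_nodup.filter _),
    ← List.countP_eq_length_filter]
  exact (hc.isTrail.even_countP_edges_iff v).mpr fun h => absurd rfl h

lemma IsPath.exists_isCycle_or_exists_isPath_cons {D : Finset (Sym2 V)}
    (hDG : ∀ e ∈ D, e ∈ G.edgeSet) (heven : ∀ v, Even #{e ∈ D | v ∈ e}) {x y : V}
    {p : G.Walk x y} (hp : p.IsPath) (hpD : ∀ e ∈ p.edges, e ∈ D) (hlen : p.length ≠ 0) :
    (∃ (w : V) (c : G.Walk w w), c.IsCycle ∧ ∀ e ∈ c.edges, e ∈ D) ∨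
      ∃ (z : V) (q : G.Walk z y), q.IsPath ∧ (∀ e ∈ q.edges, e ∈ D) ∧ q.length = p.length + 1 := by
  cases p with
  | nil => exact absurd rfl hlen
  | @cons _ w _ h r =>
    have hfirst : s(x, w) ∈ {e ∈ D | x ∈ e} :=
      mem_filter.mpr ⟨hpD _ List.mem_cons_self, Sym2.mem_mk_left x w⟩
    have htwo : 1 < #{e ∈ D | x ∈ e} := by
      obtain ⟨k, hk⟩ := heven x
      have := card_pos.mpr ⟨_, hfirst⟩
      omega
    obtain ⟨g, hg, hgne⟩ := exists_mem_ne htwo s(x, w)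
    obtain ⟨hgD, hxg⟩ := mem_filter.mp hg
    obtain ⟨z, rfl⟩ := Sym2.mem_iff_exists.mp hxg
    have hadj : G.Adj z x := (G.mem_edgeSet.mp (hDG _ hgD)).symm
    have hgp : s(x, z) ∉ (cons h r).edges :=
      fun hmem => hgne (hp.eq_of_mem_edges_of_start_mem hmem hxg)
    by_cases hz : z ∈ (cons h r).support
    · left
      refine ⟨z, cons hadj ((cons h r).takeUntil z hz), ?_, ?_⟩
      · refine (cons_isCycle_iff _ hadj).mpr ⟨hp.takeUntil hz, fun hmem => hgp ?_⟩
        exact Sym2.eq_swap ▸ edges_takeUntil_subset_edges _ hz hmem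
      · intro e he
        rcases List.mem_cons.mp he with rfl | he
        · rwa [Dart.edge_mk, Sym2.eq_swap]
        · exact hpD e (edges_takeUntil_subset_edges _ hz he)
    · right
      refine ⟨z, cons hadj (cons h r), (cons_isPath_iff _ _).mpr ⟨hp, hz⟩, ?_, rfl⟩
      intro e he
      rcases List.mem_cons.mp he with rfl | he
      · rwa [Dart.edge_mk, Sym2.eq_swap]
      · exact hpD e he

end Walk

lemma exists_isCycle_of_isPath_of_edges_ne {x y : V} {p q : G.Walk x y} (hp : p.IsPath)
    (hq : q.IsPath) (hpq : p.edges ≠ q.edges) :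
    ∃ (w : V) (c : G.Walk w w), c.IsCycle ∧ ∀ e ∈ c.edges, e ∈ p.edges ∨ e ∈ q.edges := by
  set s : Set (Sym2 V) := {e | e ∈ p.edges ∨ e ∈ q.edges}
  have hsG : s ⊆ G.edgeSet := by
    rintro e (he | he)
    exacts [p.edges_subset_edgeSet he, q.edges_subset_edgeSet he]
  have hsH : s ⊆ (fromEdgeSet s).edgeSet := fun e he =>
    (edgeSet_fromEdgeSet s).symm ▸ ⟨he, G.not_isDiag_of_mem_edgeSet (hsG he)⟩
  have hpH : ∀ e ∈ p.edges, e ∈ (fromEdgeSet s).edgeSet := fun e he => hsH (Or.inl he)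
  have hqH : ∀ e ∈ q.edges, e ∈ (fromEdgeSet s).edgeSet := fun e he => hsH (Or.inr he)
  have hcyclic : ¬(fromEdgeSet s).IsAcyclic := by
    intro hac
    have := (hac.subsingleton_path x y).elim ⟨p.transfer _ hpH, hp.transfer hpH⟩
      ⟨q.transfer _ hqH, hq.transfer hqH⟩
    apply hpq
    simpa only [Walk.edges_transfer] using congrArg (fun r => r.1.edges) this
  obtain ⟨w, c, hc⟩ : ∃ (w : V) (c : (fromEdgeSet s).Walk w w), c.IsCycle := by
    simpa [IsAcyclic] using hcyclic
  have hcs : ∀ e ∈ c.edges, e ∈ s := fun e he =>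
    ((edgeSet_fromEdgeSet s) ▸ c.edges_subset_edgeSet he).1
  exact ⟨w, c.transfer G fun e he => hsG (hcs e he), hc.transfer _,
    fun e he => hcs e (by simpa only [Walk.edges_transfer] using he)⟩

variable [DecidableEq V]

lemma exists_isCycle_of_forall_even_card_filter_mem {D : Finset (Sym2 V)}
    (hDG : ∀ e ∈ D, e ∈ G.edgeSet) (hD : D.Nonempty) (heven : ∀ v, Even #{e ∈ D | v ∈ e}) :
    ∃ (w : V) (c : G.Walk w w), c.IsCycle ∧ ∀ e ∈ c.edges, e ∈ D := by
  -- otherwise every path in `D` extends, yet a path in `D` has at most `#D` edges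
  by_contra hno
  have hlong : ∀ k : ℕ, ∃ (x y : V) (p : G.Walk x y),
      p.IsPath ∧ (∀ e ∈ p.edges, e ∈ D) ∧ p.length = k + 1 := by
    intro k
    induction k with
    | zero =>
      obtain ⟨e, he⟩ := hD
      induction e using Sym2.ind with
      | _ x y =>
      have hxy : G.Adj x y := hDG _ he
      exact ⟨x, y, hxy.toWalk, hxy.isPath_toWalk, by simpa using he, rfl⟩
    | succ k ih =>
      obtain ⟨x, y, p, hp, hpD, hlen⟩ := ih
      rcases hp.exists_isCycle_or_exists_isPath_cons hDG heven hpD (by omega) with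
        hc | ⟨z, q, hq, hqD, hqlen⟩
      · exact absurd hc hno
      · exact ⟨z, y, q, hq, hqD, by omega⟩
  obtain ⟨x, y, p, hp, hpD, hlen⟩ := hlong #D
  have := hp.isTrail.length_le_card hpD
  omega

variable {a b : V} {C1 : G.Walk a a} {C2 : G.Walk b b} {n : ℕ}

lemma le_length_add_half_of_isPath (hC1 : C1.IsCycle)
    (hmin : ∀ ⦃w : V⦄ (D : G.Walk w w), D.IsCycle →
      D.edges.toFinset ≠ C1.edges.toFinset → n ≤ D.length)
    {u v : V} (huv : u ≠ v) (hu : u ∈ C1.support) (hv : v ∈ C1.support) {p : G.Walk u v}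
    (hp : p.IsPath) (hpC1 : ∀ e ∈ p.edges, e ∉ C1.edges) :
    n ≤ p.length + C1.length / 2 := by
  obtain ⟨q, hq, hqlen, hqC1⟩ := hC1.exists_isPath_length_le_half hu hv huv
  have hpq : p.edges ≠ q.edges := by
    obtain ⟨e, he⟩ := List.exists_mem_of_ne_nil p.edges fun h =>
      huv (Walk.eq_of_length_eq_zero (by rw [← Walk.length_edges, h]; rfl))
    exact fun h => hpC1 e he (hqC1 e (h ▸ he))
  obtain ⟨w, c, hc, hcpq⟩ := exists_isCycle_of_isPath_of_edges_ne hp hq hpq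
  have hcC1 : c.edges.toFinset ≠ C1.edges.toFinset := by
    intro heq
    -- `C1` would run inside the arc `q`, which is too short
    have hC1q : C1.length ≤ #q.edges.toFinset := by
      refine hC1.isTrail.length_le_card fun e he => ?_
      have hec : e ∈ c.edges := List.mem_toFinset.mp (heq ▸ List.mem_toFinset.mpr he)
      exact List.mem_toFinset.mpr ((hcpq e hec).resolve_left fun hep => hpC1 e hep he)
    have := q.edges.toFinset_card_le
    have := hC1.three_le_length
    simp only [Walk.length_edges] at *
    omega
  have hcpq' : c.length ≤ #(p.edges.toFinset ∪ q.edges.toFinset) :=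
    hc.isTrail.length_le_card fun e he => by simpa using hcpq e he
  have := card_union_le p.edges.toFinset q.edges.toFinset
  have := p.edges.toFinset_card_le
  have := q.edges.toFinset_card_le
  have := hmin c hc hcC1
  simp only [Walk.length_edges] at *
  omega

lemma add_two_mul_card_inter_le (hC1 : C1.IsCycle) (hC2 : C2.IsCycle)
    (hne : C2.edges.toFinset ≠ C1.edges.toFinset)
    (hmin : ∀ ⦃w : V⦄ (D : G.Walk w w), D.IsCycle →
      D.edges.toFinset ≠ C1.edges.toFinset → n ≤ D.length) :
    n + 2 * #(C1.edges.toFinset ∩ C2.edges.toFinset) ≤ C1.length + C2.length := by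
  set E1 := C1.edges.toFinset
  set E2 := C2.edges.toFinset
  have hcard := card_symmDiff_add_two_mul_card_inter E1 E2
  rw [List.toFinset_card_of_nodup hC1.edges_nodup, List.toFinset_card_of_nodup hC2.edges_nodup,
    Walk.length_edges, Walk.length_edges] at hcard
  obtain hS | ⟨e, he⟩ := (E1 ∩ E2).eq_empty_or_nonempty
  · have := hmin C2 hC2 hne
    rw [hS, card_empty]
    omega
  have hDG : ∀ g ∈ E1 ∆ E2, g ∈ G.edgeSet := fun g hg => by
    rcases mem_union.mp (symmDiff_subset_union hg) with hg | hg
    exacts [C1.edges_subset_edgeSet (List.mem_toFinset.mp hg),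
      C2.edges_subset_edgeSet (List.mem_toFinset.mp hg)]
  obtain ⟨w, c, hc, hcD⟩ := exists_isCycle_of_forall_even_card_filter_mem hDG
    (symmDiff_nonempty.mpr hne.symm)
    fun v => even_card_filter_symmDiff _ (hC1.even_card_filter_mem v) (hC2.even_card_filter_mem v)
  have hcC1 : c.edges.toFinset ≠ E1 := by
    intro heq
    have heD := hcD e (List.mem_toFinset.mp (heq ▸ (mem_inter.mp he).1))
    rw [mem_symmDiff] at heD
    have := mem_inter.mp he
    tauto
  have := hmin c hc hcC1
  have := hc.isTrail.length_le_card hcD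
  omega

lemma two_mul_le_of_disjoint (hC1 : C1.IsCycle) (hC2 : C2.IsCycle)
    (hmin : ∀ ⦃w : V⦄ (D : G.Walk w w), D.IsCycle →
      D.edges.toFinset ≠ C1.edges.toFinset → n ≤ D.length)
    (hdisj : C1.edges.Disjoint C2.edges)
    (hshare : ∃ x y : V, x ≠ y ∧ x ∈ C1.support ∧ x ∈ C2.support ∧
      y ∈ C1.support ∧ y ∈ C2.support) :
    2 * n ≤ C2.length + 2 * (C1.length / 2) := by
  obtain ⟨x, y, hxy, hx1, hx2, hy1, hy2⟩ := hshare
  obtain ⟨p, q, hp, hq, hperm⟩ := hC2.exists_isPath_of_mem_support hx2 hy2 hxy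
  have hlen : p.length + q.length = C2.length := by
    simpa [← Walk.length_edges] using hperm.length_eq.symm
  have hp1 := le_length_add_half_of_isPath hC1 hmin hxy hx1 hy1 hp fun e he h1 =>
    hdisj h1 (hperm.symm.subset (List.mem_append_left _ he))
  have hq1 := le_length_add_half_of_isPath hC1 hmin hxy.symm hy1 hx1 hq fun e he h1 =>
    hdisj h1 (hperm.symm.subset (List.mem_append_right _ he))
  omega

lemma two_mul_add_two_le_of_inter_eq_pair (hC1 : C1.IsCycle) (hC2 : C2.IsCycle)
    (hmin : ∀ ⦃w : V⦄ (D : G.Walk w w), D.IsCycle →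
      D.edges.toFinset ≠ C1.edges.toFinset → n ≤ D.length)
    {e f : Sym2 V} (hef : e ≠ f) (hS : C1.edges.toFinset ∩ C2.edges.toFinset = {e, f})
    (hnadj : ∀ x : V, x ∈ e → x ∉ f) :
    2 * n + 2 ≤ C2.length + 2 * (C1.length / 2) := by
  have hmem : ∀ g ∈ ({e, f} : Finset (Sym2 V)), g ∈ C1.edges ∧ g ∈ C2.edges := by
    simp only [← hS, mem_inter, List.mem_toFinset, imp_self, implies_true]
  have he := hmem e (by simp)
  have hf := hmem f (by simp)
  obtain ⟨x, y, u, v, q, r, rfl, rfl, hq, hr, hperm⟩ :=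
    hC2.exists_split_of_mem_edges_of_mem_edges he.2 hf.2 hef
  have hnodup := hperm.nodup_iff.mp hC2.edges_nodup
  have heqr : s(x, y) ∉ q.edges ++ r.edges :=
    fun h => (List.nodup_cons.mp hnodup).1 (List.mem_cons_of_mem _ h)
  have hfqr : s(u, v) ∉ q.edges ++ r.edges := (List.nodup_cons.mp (List.nodup_cons.mp hnodup).2).1
  have hoff : ∀ g ∈ q.edges ++ r.edges, g ∉ C1.edges := by
    intro g hg hg1
    have hgS : g ∈ C1.edges.toFinset ∩ C2.edges.toFinset :=
      mem_inter.mpr ⟨List.mem_toFinset.mpr hg1,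
        List.mem_toFinset.mpr (hperm.symm.subset (by simp [hg]))⟩
    rw [hS, mem_insert, mem_singleton] at hgS
    rcases hgS with rfl | rfl
    exacts [heqr hg, hfqr hg]
  have hlen : q.length + r.length + 2 = C2.length := by
    simpa [← Walk.length_edges] using hperm.length_eq.symm
  have hq1 := le_length_add_half_of_isPath hC1 hmin
    (by rintro rfl; exact hnadj _ (Sym2.mem_mk_right x _) (Sym2.mem_mk_left _ v))
    (C1.snd_mem_support_of_mem_edges he.1) (C1.fst_mem_support_of_mem_edges hf.1) hq
    fun g hg => hoff g (List.mem_append_left _ hg)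
  have hr1 := le_length_add_half_of_isPath hC1 hmin
    (by rintro rfl; exact hnadj _ (Sym2.mem_mk_left _ y) (Sym2.mem_mk_right u _))
    (C1.snd_mem_support_of_mem_edges hf.1) (C1.fst_mem_support_of_mem_edges he.1) hr
    fun g hg => hoff g (List.mem_append_right _ hg)
  omega

end SimpleGraph

theorem stmt_2_general {V : Type*} [DecidableEq V] (G : SimpleGraph V)
    (hgirth : G.girth = 5) {a b : V} (C1 : G.Walk a a) (C2 : G.Walk b b)
    (hC1 : C1.IsCycle) (hC1len : C1.length = 5) (hC2 : C2.IsCycle)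
    (hne : C2.edges.toFinset ≠ C1.edges.toFinset)
    (hmin : ∀ ⦃w : V⦄ (D : G.Walk w w), D.IsCycle →
      D.edges.toFinset ≠ C1.edges.toFinset → C2.length ≤ D.length)
    (hshare : ∃ x y : V, x ≠ y ∧ x ∈ C1.support ∧ x ∈ C2.support ∧
      y ∈ C1.support ∧ y ∈ C2.support) :
    (C1.edges.toFinset ∩ C2.edges.toFinset).card = 1 ∨
      ((C1.edges.toFinset ∩ C2.edges.toFinset).card = 2 ∧
        ∃ e f : Sym2 V, e ≠ f ∧ C1.edges.toFinset ∩ C2.edges.toFinset = {e, f} ∧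
          ∃ x : V, x ∈ e ∧ x ∈ f) := by
  have h5 : 5 ≤ C2.length := hgirth ▸ G.girth_le_length hC2
  have hle := add_two_mul_card_inter_le hC1 hC2 hne hmin
  have hpos : #(C1.edges.toFinset ∩ C2.edges.toFinset) ≠ 0 := by
    intro h0
    have hdisj : C1.edges.Disjoint C2.edges := by
      simpa [← List.disjoint_toFinset_iff_disjoint, disjoint_iff_inter_eq_empty] using h0
    have := two_mul_le_of_disjoint hC1 hC2 hmin hdisj hshare
    omega
  obtain h1 | h2 : #(C1.edges.toFinset ∩ C2.edges.toFinset) = 1 ∨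
      #(C1.edges.toFinset ∩ C2.edges.toFinset) = 2 := by omega
  · exact Or.inl h1
  obtain ⟨e, f, hef, hS⟩ := card_eq_two.mp h2
  refine Or.inr ⟨h2, e, f, hef, hS, ?_⟩
  by_contra! hnadj
  have := two_mul_add_two_le_of_inter_eq_pair hC1 hC2 hmin hef hS hnadj
  omega

/-- Girth 5: if the second-shortest cycle shares two vertices with a shortest cycle,
then their edge intersection is exactly one edge or exactly two adjacent edges. -/
theorem stmt_2 {V : Type*} [DecidableEq V] (G : SimpleGraph V) (hG : G.Connected)
    (hgirth : G.girth = 5) {a b : V} (C1 : G.Walk a a) (C2 : G.Walk b b)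
    (hC1 : C1.IsCycle) (hC1len : C1.length = 5) (hC2 : C2.IsCycle)
    (hne : C2.edges.toFinset ≠ C1.edges.toFinset)
    (hmin : ∀ ⦃w : V⦄ (D : G.Walk w w), D.IsCycle →
      D.edges.toFinset ≠ C1.edges.toFinset → C2.length ≤ D.length)
    (hshare : ∃ x y : V, x ≠ y ∧ x ∈ C1.support ∧ x ∈ C2.support ∧
      y ∈ C1.support ∧ y ∈ C2.support) :
    (C1.edges.toFinset ∩ C2.edges.toFinset).card = 1 ∨
      ((C1.edges.toFinset ∩ C2.edges.toFinset).card = 2 ∧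
        ∃ e f : Sym2 V, e ≠ f ∧ C1.edges.toFinset ∩ C2.edges.toFinset = {e, f} ∧
          ∃ x : V, x ∈ e ∧ x ∈ f) :=
  stmt_2_general G hgirth C1 C2 hC1 hC1len hC2 hne hmin hshare
end

section
/- Let G be a connected graph with girth 5, and let C1 be a 5-cycle in G that is a shortest cycle. Suppose C2 is a shortest cycle among all cycles of G distinct from C1, and C1 and C2 have exactly two common vertices u and v that are adjacent on C1. Then the edge uv belongs to C2. -/
/-!
If `uv` were not an edge of `C2`, it would be a chord of `C2`, and one of the two arcs of `C2`
between `u` and `v`, closed up by `uv`, is a cycle `D` strictly shorter than `C2` whose vertices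
lie on `C2`. By the minimality of `C2`, `D` has the edge set of `C1`, so its vertices also lie on
`C1`; hence they all lie in `{u, v}`, which is absurd for a cycle.
-/

open SimpleGraph

namespace SimpleGraph.Walk

variable {V : Type*} {G : SimpleGraph V} {u v w x y : V}

theorem support_subset_support_of_edges_subset {p : G.Walk u v} {q : G.Walk x y} (hp : ¬p.Nil)
    (h : p.edges ⊆ q.edges) : p.support ⊆ q.support := fun _ hz ↦ by
  obtain ⟨e, he, hze⟩ := (mem_support_iff_exists_mem_edges_of_not_nil hp).mp hz
  exact mem_support_of_mem_edges (h he) hze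

theorem IsCycle.exists_mem_support_ne {p : G.Walk u u} (hp : p.IsCycle) (x y : V) :
    ∃ z ∈ p.support, z ≠ x ∧ z ≠ y := by
  classical
  by_contra! h
  have hsub : p.support.tail.toFinset ⊆ {x, y} := fun z hz ↦ by
    have hz := List.mem_toFinset.mp hz
    by_cases hzx : z = x
    · simp [hzx]
    · simp [h z (List.mem_of_mem_tail hz) hzx]
  have hcard := Finset.card_le_card hsub
  rw [List.toFinset_card_of_nodup hp.support_nodup, List.length_tail, length_support] at hcard
  have := hp.three_le_length
  have := Finset.card_le_two (a := x) (b := y)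
  omega

theorem IsCycle.exists_isCycle_length_lt_of_isChord [DecidableEq V] {c : G.Walk w w}
    (hc : c.IsCycle) (h : c.IsChord s(u, v)) :
    ∃ d : G.Walk u u, d.IsCycle ∧ d.length < c.length ∧ d.support ⊆ c.support := by
  obtain ⟨hadj, hnot, hu, hv⟩ := isChord_sym2Mk.mp h
  set r := c.rotate u hu
  have hr : r.IsCycle := hc.rotate hu
  have hv' : v ∈ r.support := (mem_support_rotate_iff ..).mpr hv
  have hnot' : s(u, v) ∉ r.edges := fun h ↦ hnot ((rotate_edges c u hu).mem_iff.mp h)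
  set p := r.takeUntil v hv'
  set q := r.dropUntil v hv'
  have hpq : p.append q = r := take_spec r hv'
  -- The other arc `p` also closes up into a cycle, so it has length at least 2.
  have hp : (cons hadj.symm p).IsCycle := (cons_isCycle_iff p hadj.symm).mpr
    ⟨hr.isPath_takeUntil hv', fun h ↦ hnot' (edges_takeUntil_subset_edges r hv' (Sym2.eq_swap ▸ h))⟩
  have hq : (cons hadj q).IsCycle := (cons_isCycle_iff q hadj).mpr
    ⟨IsCycle.isPath_of_append_right (p := p) (not_nil_of_ne hadj.ne) (hpq ▸ hr),
      fun h ↦ hnot' (edges_dropUntil_subset_edges r hv' h)⟩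
  refine ⟨cons hadj q, hq, ?_, ?_⟩
  · have hlen := congrArg length hpq
    have := hp.three_le_length
    simp only [length_append, length_cons, r, length_rotate] at hlen this ⊢
    omega
  · rw [support_cons, List.cons_subset]
    exact ⟨hu, fun z hz ↦ (mem_support_rotate_iff ..).mp (support_dropUntil_subset_support r hv' hz)⟩

end SimpleGraph.Walk

theorem stmt_3_general {V : Type*} [DecidableEq V] (G : SimpleGraph V) {a b : V} (C1 : G.Walk a a)
    (C2 : G.Walk b b) (hC2 : C2.IsCycle)
    (hmin : ∀ ⦃w : V⦄ (D : G.Walk w w), D.IsCycle →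
      D.edges.toFinset ≠ C1.edges.toFinset → C2.length ≤ D.length)
    (u v : V)
    (hinter : {x : V | x ∈ C1.support ∧ x ∈ C2.support} = {u, v})
    (hedge : s(u, v) ∈ C1.edges) :
    s(u, v) ∈ C2.edges := by
  have hcommon : ∀ x, x ∈ C1.support ∧ x ∈ C2.support ↔ x = u ∨ x = v := fun x ↦ by
    simpa using Set.ext_iff.mp hinter x
  have hu : u ∈ C2.support := ((hcommon u).2 (.inl rfl)).2
  have hv : v ∈ C2.support := ((hcommon v).2 (.inr rfl)).2
  by_contra hnot
  obtain ⟨D, hD, hlt, hDC2supp⟩ := hC2.exists_isCycle_length_lt_of_isChord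
    (Walk.isChord_sym2Mk.mpr ⟨C1.adj_of_mem_edges hedge, hnot, hu, hv⟩)
  have hDC1 : D.edges.toFinset = C1.edges.toFinset := by
    by_contra hne
    exact (hmin D hD hne).not_gt hlt
  have hDC1supp : D.support ⊆ C1.support :=
    Walk.support_subset_support_of_edges_subset hD.not_nil fun e he ↦ by
      simpa [hDC1] using List.mem_toFinset.mpr he
  obtain ⟨z, hz, hzu, hzv⟩ := hD.exists_mem_support_ne u v
  exact ((hcommon z).1 ⟨hDC1supp hz, hDC2supp hz⟩).elim hzu hzv

/-- Girth 5: if a shortest 5-cycle `C1` and the second-shortest cycle `C2` meet in exactly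
two vertices `u, v` that are adjacent on `C1`, then the edge `uv` lies on `C2`. -/
theorem stmt_3 {V : Type*} [DecidableEq V] (G : SimpleGraph V) (hG : G.Connected)
    (hgirth : G.girth = 5) {a b : V} (C1 : G.Walk a a) (C2 : G.Walk b b)
    (hC1 : C1.IsCycle) (hC1len : C1.length = 5) (hC2 : C2.IsCycle)
    (hne : C2.edges.toFinset ≠ C1.edges.toFinset)
    (hmin : ∀ ⦃w : V⦄ (D : G.Walk w w), D.IsCycle →
      D.edges.toFinset ≠ C1.edges.toFinset → C2.length ≤ D.length)
    (u v : V) (huv : u ≠ v)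
    (hinter : {x : V | x ∈ C1.support ∧ x ∈ C2.support} = {u, v})
    (hedge : s(u, v) ∈ C1.edges) :
    s(u, v) ∈ C2.edges :=
  stmt_3_general G C1 C2 hC2 hmin u v hinter hedge
end

section
/- A connected graph G with m edges satisfies src(G) ≤ m − 2 if and only if G is not a tree. -/
open SimpleGraph

/-- An edge-coloring `c` is a strong rainbow coloring of `G` if every pair of vertices is
joined by a geodesic (shortest path) whose edges receive pairwise distinct colors. -/
def SimpleGraph.IsStrongRainbowColoring {V : Type*} (G : SimpleGraph V) (c : Sym2 V → ℕ) : Prop :=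
  ∀ u v : V, ∃ p : G.Walk u v, p.IsPath ∧ p.length = G.dist u v ∧ (p.edges.map c).Nodup

/-- The strong rainbow connection number: the least number of colors in a strong rainbow
coloring of `G`. -/
noncomputable def SimpleGraph.src {V : Type*} (G : SimpleGraph V) : ℕ :=
  sInf {n : ℕ | ∃ c : Sym2 V → Fin n, ∀ u v : V, ∃ p : G.Walk u v,
    p.IsPath ∧ p.length = G.dist u v ∧ (p.edges.map c).Nodup}

/-!
If `G` is a tree, any two edges lie on a common path, and that path is the only geodesic between
its ends; so a strong rainbow colouring is injective on edges and `src G = m`.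

Otherwise let `C` be a shortest cycle, of length `g`. Distances between vertices of `C` are their
distances along `C`, and a geodesic passing through an edge `xx'` and then an edge `yy'` satisfies
`d(x, y') = d(x', y) + 2`. Together these show that two (nearly) antipodal edges of `C` never lie
on a common geodesic. Hence the edges at positions `⌊g/2⌋` and `⌊g/2⌋ + 1` of `C` can reuse the
colours of the edges at positions `0` and `1` (for a triangle, all three edges get one colour),
and `m - 2` colours suffice.
-/

namespace SimpleGraph

variable {V : Type*} {G : SimpleGraph V}

open Finset

def GeodesicallySeparated (G : SimpleGraph V) (e f : Sym2 V) : Prop :=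
  ∀ ⦃u v : V⦄ (p : G.Walk u v), p.length = G.dist u v → e ∈ p.edges → f ∉ p.edges

lemma GeodesicallySeparated.symm {e f : Sym2 V} (h : G.GeodesicallySeparated e f) :
    G.GeodesicallySeparated f e :=
  fun _ _ p hp hf he ↦ h p hp he hf

namespace Walk

lemma exists_isSubwalk_getVert_getVert {u v : V} (p : G.Walk u v) {i j : ℕ} (hij : i ≤ j)
    (hj : j ≤ p.length) :
    ∃ q : G.Walk (p.getVert i) (p.getVert j), q.IsSubwalk p ∧ q.length = j - i := by
  have hend : (p.drop i).getVert (j - i) = p.getVert j := by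
    rw [drop_getVert, Nat.add_sub_cancel' hij]
  refine ⟨((p.drop i).take (j - i)).copy rfl hend, ?_, by simp; omega⟩
  simpa using (((p.drop i).isSubwalk_take _).trans (p.isSubwalk_drop i)).copy rfl hend rfl rfl

lemma dist_getVert_getVert_of_length_eq_dist {u v : V} {p : G.Walk u v}
    (hp : p.length = G.dist u v) {i j : ℕ} (hij : i ≤ j) (hj : j ≤ p.length) :
    G.dist (p.getVert i) (p.getVert j) = j - i := by
  obtain ⟨q, hq, hlen⟩ := p.exists_isSubwalk_getVert_getVert hij hj
  rw [← length_eq_dist_of_subwalk hp hq, hlen]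

lemma IsPath.min_length_girth_sub_le_dist {u v : V} {p : G.Walk u v} (hp : p.IsPath) :
    min p.length (G.girth - p.length) ≤ G.dist u v := by
  obtain ⟨q, hq, hql⟩ := p.reachable.exists_path_of_dist
  by_cases hpq : p = q
  · subst hpq
    exact hql ▸ min_le_left _ _
  obtain ⟨_, -, -, c, hc, hcl⟩ := hp.exists_isCycle_length_le_add_of_ne hq hpq
  have := girth_le_length hc
  omega

lemma IsTrail.mk_getVert_ne {u v : V} {p : G.Walk u v} (hp : p.IsTrail) {i j : ℕ}
    (hi : i < p.length) (hj : j < p.length) (hij : i ≠ j) :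
    s(p.getVert i, p.getVert (i + 1)) ≠ s(p.getVert j, p.getVert (j + 1)) := by
  rw [← getElem_edges (by simpa using hi), ← getElem_edges (by simpa using hj)]
  exact hp.edges_nodup.getElem_inj_iff.not.mpr hij

lemma IsCycle.dist_getVert_getVert {u : V} {c : G.Walk u u} (hc : c.IsCycle)
    (hg : G.girth = c.length) {i j : ℕ} (hij : i ≤ j) (hj : j ≤ c.length) :
    G.dist (c.getVert i) (c.getVert j) = min (j - i) (c.length - (j - i)) := by
  apply le_antisymm
  · obtain ⟨q, -, hq⟩ := c.exists_isSubwalk_getVert_getVert hij hj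
    have hshort : G.dist (c.getVert i) (c.getVert j) ≤ j - i := hq ▸ dist_le q
    have hlong : G.dist (c.getVert j) (c.getVert i) ≤ c.length - (j - i) := by
      have := dist_le ((c.drop j).append (c.take i))
      simp only [length_append, drop_length, take_length] at this
      omega
    exact le_min hshort (dist_comm ▸ hlong)
  · rcases Nat.eq_zero_or_pos i with rfl | hi
    · rcases hj.lt_or_eq with hj | rfl
      · simpa [hg, hj.le] using (hc.isPath_take hj).min_length_girth_sub_le_dist
      · simp
    · obtain ⟨q, hq, hql⟩ := (c.drop i).exists_isSubwalk_getVert_getVert (Nat.zero_le (j - i))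
        (by simp; omega)
      have := (isPath_of_isSubwalk hq (hc.isPath_drop hi)).min_length_girth_sub_le_dist
      simpa [drop_getVert, hql, hg, Nat.add_sub_cancel' hij] using this

end Walk

lemma geodesicallySeparated_of_dist_ne {a b c d : V} (hne : s(a, b) ≠ s(c, d))
    (had : G.dist a d ≠ G.dist b c + 2) (hbc : G.dist b c ≠ G.dist a d + 2)
    (hac : G.dist a c ≠ G.dist b d + 2) (hbd : G.dist b d ≠ G.dist a c + 2) :
    G.GeodesicallySeparated s(a, b) s(c, d) := by
  intro u v p hp hab hcd
  rw [Walk.mk_mem_edges_iff_exists] at hab hcd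
  obtain ⟨i, hi, hpi⟩ := hab
  obtain ⟨j, hj, hpj⟩ := hcd
  have hij : i ≠ j := by rintro rfl; exact hne (hpi.symm.trans hpj)
  wlog hlt : i < j generalizing a b c d i j
  · exact this hne.symm (by rwa [dist_comm (u := c), dist_comm (u := d)])
      (by rwa [dist_comm (u := d), dist_comm (u := c)])
      (by rwa [dist_comm (u := c), dist_comm (u := d)])
      (by rwa [dist_comm (u := d), dist_comm (u := c)]) j hj hpj i hi hpi hij.symm (by omega)
  have key : G.dist (p.getVert i) (p.getVert (j + 1)) =
      G.dist (p.getVert (i + 1)) (p.getVert j) + 2 := by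
    rw [p.dist_getVert_getVert_of_length_eq_dist hp (by omega) hj,
      p.dist_getVert_getVert_of_length_eq_dist hp (by omega) hj.le]
    omega
  rw [Sym2.eq_iff] at hpi hpj
  rcases hpi with ⟨rfl, rfl⟩ | ⟨rfl, rfl⟩ <;> rcases hpj with ⟨rfl, rfl⟩ | ⟨rfl, rfl⟩
  exacts [had key, hac key, hbd key, hbc key]

lemma Walk.IsCycle.geodesicallySeparated {u : V} {c : G.Walk u u} (hc : c.IsCycle)
    (hg : G.girth = c.length) {i j : ℕ} (hij : i < j) (hj : j < c.length)
    (hlo : c.length ≤ 2 * (j - i) + 1) (hhi : 2 * (j - i) ≤ c.length + 1) :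
    G.GeodesicallySeparated s(c.getVert i, c.getVert (i + 1))
      s(c.getVert j, c.getVert (j + 1)) := by
  apply geodesicallySeparated_of_dist_ne (hc.isTrail.mk_getVert_ne (by omega) hj hij.ne)
  all_goals
    rw [hc.dist_getVert_getVert hg (by omega) (by omega),
      hc.dist_getVert_getVert hg (by omega) (by omega)]
    omega

lemma isStrongRainbowColoring_of_geodesicallySeparated (hG : G.Connected) (c : Sym2 V → ℕ)
    (hc : ∀ e ∈ G.edgeSet, ∀ f ∈ G.edgeSet, e ≠ f → c e = c f → G.GeodesicallySeparated e f) :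
    G.IsStrongRainbowColoring c := by
  intro u v
  obtain ⟨p, hp, hpl⟩ := hG.exists_path_of_dist u v
  refine ⟨p, hp, hpl, hp.isTrail.edges_nodup.map_on fun e he f hf hef ↦ ?_⟩
  by_contra hne
  exact hc e (p.edges_subset_edgeSet he) f (p.edges_subset_edgeSet hf) hne hef p hpl he hf

lemma src_eq_sInf_isStrongRainbowColoring :
    G.src = sInf {n | ∃ c : Sym2 V → Fin n, G.IsStrongRainbowColoring fun e ↦ c e} := by
  have hval {n : ℕ} (c : Sym2 V → Fin n) (l : List (Sym2 V)) :
      (l.map fun e ↦ (c e : ℕ)).Nodup ↔ (l.map c).Nodup := by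
    rw [← List.nodup_map_iff Fin.val_injective, List.map_map]
    rfl
  simp only [src, IsStrongRainbowColoring, hval]

lemma src_le_of_isStrongRainbowColoring {n : ℕ} (c : Sym2 V → Fin n)
    (hc : G.IsStrongRainbowColoring fun e ↦ c e) : G.src ≤ n :=
  src_eq_sInf_isStrongRainbowColoring (G := G) ▸ Nat.sInf_le ⟨c, hc⟩

lemma src_le_card_of_geodesicallySeparated {α : Type*} [Fintype α] (hG : G.Connected)
    (c : Sym2 V → α)
    (hc : ∀ e ∈ G.edgeSet, ∀ f ∈ G.edgeSet, e ≠ f → c e = c f → G.GeodesicallySeparated e f) :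
    G.src ≤ Fintype.card α :=
  src_le_of_isStrongRainbowColoring (Fintype.equivFin α ∘ c)
    (isStrongRainbowColoring_of_geodesicallySeparated hG _ fun e he f hf hne hef ↦
      hc e he f hf hne (by simpa [Fin.val_inj] using hef))

lemma exists_isStrongRainbowColoring_src [Finite V] (hG : G.Connected) :
    ∃ c : Sym2 V → Fin G.src, G.IsStrongRainbowColoring fun e ↦ c e := by
  have : Fintype (Sym2 V) := Fintype.ofFinite _
  have hne : {n | ∃ c : Sym2 V → Fin n, G.IsStrongRainbowColoring fun e ↦ c e}.Nonempty :=
    ⟨_, Fintype.equivFin _, isStrongRainbowColoring_of_geodesicallySeparated hG _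
      fun e _ f _ hne hef ↦ absurd ((Fintype.equivFin _).injective (Fin.val_injective hef)) hne⟩
  rw [src_eq_sInf_isStrongRainbowColoring]
  exact Nat.sInf_mem hne

lemma IsAcyclic.exists_isPath_mem_edges_of_adj (hG : G.IsAcyclic) {a b x : V} {p : G.Walk a x}
    (hp : p.IsPath) (hab : G.Adj a b) :
    ∃ (u : V) (q : G.Walk u x), q.IsPath ∧ s(a, b) ∈ q.edges ∧ p.edges ⊆ q.edges := by
  by_cases hb : b ∈ p.support
  · refine ⟨a, p, hp, ?_, List.Subset.refl _⟩
    have hnil : ¬ p.Nil := by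
      rintro ⟨⟩
      simp only [Walk.support_nil, List.mem_singleton] at hb
      exact hab.ne hb.symm
    rw [hG.eq_snd_of_adj_start hp hab hb]
    exact p.mk_start_snd_mem_edges hnil
  · exact ⟨b, .cons hab.symm p, (Walk.cons_isPath_iff _ _).mpr ⟨hp, hb⟩, by simp [Sym2.eq_swap],
      by simp⟩

lemma IsTree.exists_isPath_mem_edges (hG : G.IsTree) {e f : Sym2 V} (he : e ∈ G.edgeSet)
    (hf : f ∈ G.edgeSet) : ∃ (u v : V) (p : G.Walk u v), p.IsPath ∧ e ∈ p.edges ∧ f ∈ p.edges := by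
  induction e with | h a b => ?_
  induction f with | h x y => ?_
  obtain ⟨p, hp⟩ := (hG.connected a x).exists_isPath
  obtain ⟨u, q, hq, hab, -⟩ := hG.isAcyclic.exists_isPath_mem_edges_of_adj hp he
  obtain ⟨v, r, hr, hxy, hqr⟩ := hG.isAcyclic.exists_isPath_mem_edges_of_adj hq.reverse hf
  exact ⟨v, u, r, hr, hqr (by simpa using hab), hxy⟩

lemma IsTree.card_edgeFinset_le_src [Fintype V] [DecidableRel G.Adj]
    (hG : G.IsTree) : #G.edgeFinset ≤ G.src := by
  obtain ⟨c, hc⟩ := exists_isStrongRainbowColoring_src hG.connected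
  have hinj : Set.InjOn c G.edgeSet := by
    intro e he f hf hef
    obtain ⟨u, v, p, hp, hep, hfp⟩ := hG.exists_isPath_mem_edges he hf
    obtain ⟨q, hq, -, hrainbow⟩ := hc u v
    obtain rfl : q = p :=
      congrArg Subtype.val ((hG.isAcyclic.subsingleton_path u v).elim ⟨q, hq⟩ ⟨p, hp⟩)
    exact List.inj_on_of_nodup_map hrainbow hep hfp (congrArg Fin.val hef)
  simpa using card_le_card_of_injOn c (fun _ _ ↦ mem_univ _) (by simpa [Set.InjOn] using hinj)

lemma src_add_two_le_of_geodesicallySeparated [Fintype V] [DecidableEq V] [DecidableRel G.Adj]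
    (hG : G.Connected) {e₀ e₁ r₀ r₁ : Sym2 V} (he₀ : e₀ ∈ G.edgeFinset \ {r₀, r₁})
    (he₁ : e₁ ∈ G.edgeFinset \ {r₀, r₁}) (hr₀ : r₀ ∈ G.edgeFinset) (hr₁ : r₁ ∈ G.edgeFinset)
    (hr : r₀ ≠ r₁) (hsep₀ : G.GeodesicallySeparated e₀ r₀)
    (hsep₁ : G.GeodesicallySeparated e₁ r₁) (hsep : e₀ = e₁ → G.GeodesicallySeparated r₀ r₁) :
    G.src + 2 ≤ #G.edgeFinset := by
  set S := G.edgeFinset \ {r₀, r₁}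
  let c : Sym2 V → S := fun z ↦
    if hz : z ∈ S then ⟨z, hz⟩ else if z = r₁ then ⟨e₁, he₁⟩ else ⟨e₀, he₀⟩
  have hc : ∀ z ∈ G.edgeSet, ((c z : Sym2 V) = z ∧ z ∈ S) ∨ (z = r₀ ∧ (c z : Sym2 V) = e₀) ∨
      (z = r₁ ∧ (c z : Sym2 V) = e₁) := by
    intro z hz
    simp only [c]
    split_ifs <;> simp_all [S]
  have hcard : #S + 2 = #G.edgeFinset := by
    rw [← card_pair hr]
    exact card_sdiff_add_card_eq_card (insert_subset hr₀ (singleton_subset_iff.mpr hr₁))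
  have hsrc := src_le_card_of_geodesicallySeparated hG c fun e he f hf hne hef ↦ by
    have hval := congrArg Subtype.val hef
    rcases hc e he with ⟨he', heS⟩ | ⟨rfl, he'⟩ | ⟨rfl, he'⟩ <;>
      rcases hc f hf with ⟨hf', hfS⟩ | ⟨rfl, hf'⟩ | ⟨rfl, hf'⟩
    all_goals grind [GeodesicallySeparated.symm]
  simp only [Fintype.card_coe] at hsrc
  omega

lemma src_add_two_le_of_not_isAcyclic [Fintype V] [DecidableRel G.Adj]
    (hG : G.Connected) (hA : ¬ G.IsAcyclic) : G.src + 2 ≤ #G.edgeFinset := by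
  classical
  obtain ⟨_, C, hC, hg⟩ := exists_girth_eq_length.mpr hA
  let E (t : ℕ) : Sym2 V := s(C.getVert t, C.getVert (t + 1))
  have hE {t : ℕ} (ht : t < C.length) : E t ∈ G.edgeFinset := by
    simpa [E] using C.adj_getVert_succ ht
  have hE' {t s s' : ℕ} (ht : t < C.length) (hs : s < C.length) (hs' : s' < C.length)
      (h : t ≠ s) (h' : t ≠ s') : E t ∈ G.edgeFinset \ {E s, E s'} := by
    simp only [mem_sdiff, mem_insert, mem_singleton, not_or]
    exact ⟨hE ht, hC.isTrail.mk_getVert_ne ht hs h, hC.isTrail.mk_getVert_ne ht hs' h'⟩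
  rcases hC.three_le_length.eq_or_lt with h3 | h4
  · refine src_add_two_le_of_geodesicallySeparated hG (e₀ := E 0) (e₁ := E 0) (r₀ := E 1)
      (r₁ := E 2) (hE' ?_ ?_ ?_ ?_ ?_) (hE' ?_ ?_ ?_ ?_ ?_) (hE ?_) (hE ?_)
      (hC.isTrail.mk_getVert_ne ?_ ?_ ?_) (hC.geodesicallySeparated hg ?_ ?_ ?_ ?_)
      (hC.geodesicallySeparated hg ?_ ?_ ?_ ?_)
      fun _ ↦ hC.geodesicallySeparated hg ?_ ?_ ?_ ?_
    all_goals omega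
  · set k := C.length / 2
    refine src_add_two_le_of_geodesicallySeparated hG (e₀ := E 0) (e₁ := E 1) (r₀ := E k)
      (r₁ := E (k + 1)) (hE' ?_ ?_ ?_ ?_ ?_) (hE' ?_ ?_ ?_ ?_ ?_) (hE ?_) (hE ?_)
      (hC.isTrail.mk_getVert_ne ?_ ?_ ?_) (hC.geodesicallySeparated hg ?_ ?_ ?_ ?_)
      (hC.geodesicallySeparated hg ?_ ?_ ?_ ?_)
      fun h ↦ absurd h (hC.isTrail.mk_getVert_ne ?_ ?_ ?_)
    all_goals omega

end SimpleGraph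

theorem stmt_8_general {V : Type*} [Fintype V] (G : SimpleGraph V)
    [DecidableRel G.Adj] (hG : G.Connected) :
    G.src + 2 ≤ G.edgeFinset.card ↔ ¬ G.IsTree := by
  constructor
  · intro h hT
    have := hT.card_edgeFinset_le_src
    omega
  · intro hT
    exact G.src_add_two_le_of_not_isAcyclic hG fun hA ↦ hT ⟨hG, hA⟩

/-- `src G ≤ m - 2` iff `G` is not a tree (stated without truncated subtraction). -/
theorem stmt_8 {V : Type*} [Fintype V] [DecidableEq V] (G : SimpleGraph V)
    [DecidableRel G.Adj] (hG : G.Connected) :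
    G.src + 2 ≤ G.edgeFinset.card ↔ ¬ G.IsTree :=
  stmt_8_general G hG
end

section
/- If G ∈ Ḡ_t (every block of G is a bridge or a triangle, G has exactly t triangles, and each triangle has a vertex of degree 2 in G), then in any strong rainbow coloring of G, the edges of any D2-tree T_G of G all receive pairwise distinct colors; consequently src(G) ≥ m − 2t. -/
/-!
Let `T` be `G` with the edges at `W` removed; away from the isolated vertices of `W` it is the
D2-tree `T_G`. A vertex of `W` has degree 2 and lies in a triangle, so its neighbourhood is a
clique and no geodesic passes through it: geodesics between vertices outside `W` run inside `T`.
Every cycle of `G` is a triangle meeting `W`, so `T` is a forest. Any two edges of a component of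
a forest lie on a common path, which is the only path of `T` between its ends and hence is the
rainbow geodesic there; so the two edges get different colours. Finally at most
`2 |W| ≤ 2 t` edges of `G` meet `W`.
-/

open SimpleGraph

namespace SimpleGraph

variable {V : Type*} {G H : SimpleGraph V}

def deleteIncidenceSets (G : SimpleGraph V) (W : Set V) : SimpleGraph V where
  Adj a b := G.Adj a b ∧ a ∉ W ∧ b ∉ W
  symm := ⟨fun _ _ h ↦ ⟨h.1.symm, h.2.2, h.2.1⟩⟩
  loopless := ⟨fun a h ↦ G.loopless.irrefl a h.1⟩

section deleteIncidenceSets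

variable {W : Set V}

theorem deleteIncidenceSets_adj {a b : V} :
    (G.deleteIncidenceSets W).Adj a b ↔ G.Adj a b ∧ a ∉ W ∧ b ∉ W :=
  Iff.rfl

theorem deleteIncidenceSets_le : G.deleteIncidenceSets W ≤ G :=
  fun _ _ h ↦ h.1

theorem mem_edgeSet_deleteIncidenceSets {e : Sym2 V} :
    e ∈ (G.deleteIncidenceSets W).edgeSet ↔ e ∈ G.edgeSet ∧ ∀ x ∈ e, x ∉ W := by
  induction e using Sym2.ind with
  | _ a b => simp [deleteIncidenceSets_adj]

theorem isAcyclic_deleteIncidenceSets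
    (hcycle : ∀ (a : V) (c : G.Walk a a), c.IsCycle → c.length = 3)
    (hW : ∀ a b c : V, G.Adj a b → G.Adj b c → G.Adj a c → a ∈ W ∨ b ∈ W ∨ c ∈ W) :
    (G.deleteIncidenceSets W).IsAcyclic := by
  intro v c hc
  have hlen : c.length = 3 := by
    simpa using hcycle v _ (hc.mapLe deleteIncidenceSets_le)
  have h01 := c.adj_getVert_succ (i := 0) (by omega)
  have h12 := c.adj_getVert_succ (i := 1) (by omega)
  have h23 := c.adj_getVert_succ (i := 2) (by omega)
  rw [Walk.getVert_zero] at h01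
  rw [show 2 + 1 = c.length by omega, Walk.getVert_length] at h23
  rcases hW _ _ _ h01.1 h12.1 h23.1.symm with h | h | h
  · exact h01.2.1 h
  · exact h12.2.1 h
  · exact h23.2.1 h

end deleteIncidenceSets

theorem isClique_neighborSet_of_degree_eq_two [Fintype V] [DecidableRel G.Adj] [DecidableEq V]
    {w a b : V} (hdeg : G.degree w = 2) (ha : G.Adj w a) (hb : G.Adj w b) (hab : G.Adj a b) :
    G.IsClique (G.neighborSet w) := by
  have hnbr : G.neighborFinset w = {a, b} := by
    refine (Finset.eq_of_subset_of_card_le ?_ ?_).symm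
    · simp [Finset.insert_subset_iff, ha, hb]
    · rw [card_neighborFinset_eq_degree, hdeg, Finset.card_pair hab.ne]
  intro x hx y hy hxy
  replace hx : x ∈ G.neighborFinset w := by simpa using hx
  replace hy : y ∈ G.neighborFinset w := by simpa using hy
  simp only [hnbr, Finset.mem_insert, Finset.mem_singleton] at hx hy
  rcases hx with rfl | rfl <;> rcases hy with rfl | rfl
  exacts [absurd rfl hxy, hab, hab.symm, absurd rfl hxy]

-- A geodesic `a - w - b` would force `G.dist a b = 2`, but the clique makes `a, b` adjacent.
theorem Walk.notMem_support_of_length_eq_dist {p q w : V} (R : G.Walk p q)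
    (hR : R.length = G.dist p q) (hw : G.IsClique (G.neighborSet w)) (hwp : w ≠ p)
    (hwq : w ≠ q) : w ∉ R.support := by
  classical
  intro hmem
  set T := R.takeUntil w hmem
  set D := R.dropUntil w hmem
  have hT : ¬ T.Nil := Walk.not_nil_of_ne hwp.symm
  have hD : ¬ D.Nil := Walk.not_nil_of_ne hwq
  have ha := T.adj_penultimate hT
  have hb := D.adj_snd hD
  have hsub : (Walk.cons ha (Walk.cons hb Walk.nil)).IsSubwalk R := by
    have hspec : T.append D = R := R.take_spec hmem
    refine ⟨T.dropLast, D.tail, ?_⟩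
    conv_lhs => rw [← hspec, ← Walk.concat_dropLast ha, ← Walk.cons_tail_eq D hD]
    simp only [Walk.concat_eq_append, ← Walk.append_assoc, Walk.cons_append, Walk.nil_append]
  have hdist := length_eq_dist_of_subwalk hR hsub
  simp only [Walk.length_cons, Walk.length_nil] at hdist
  have hne : T.penultimate ≠ D.snd := by
    rintro h
    rw [h, dist_self] at hdist
    omega
  have := dist_eq_one_iff_adj.mpr (hw ha.symm hb hne)
  omega

theorem IsAcyclic.exists_isPath_mem_edges_of_adj_s16 (hH : H.IsAcyclic) {u v x : V}
    (huv : H.Adj u v) {P : H.Walk v x} (hP : P.IsPath) :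
    ∃ p, ∃ Q : H.Walk p x, Q.IsPath ∧ s(u, v) ∈ Q.edges ∧ P.edges ⊆ Q.edges := by
  by_cases he : s(u, v) ∈ P.edges
  · exact ⟨v, P, hP, he, List.Subset.refl _⟩
  · refine ⟨u, Walk.cons huv P, ?_, by simp, by simp⟩
    rw [hH.isPath_iff_isTrail, Walk.isTrail_cons]
    exact ⟨hP.isTrail, he⟩

theorem IsAcyclic.exists_isPath_mem_edges (hH : H.IsAcyclic) {u v x y : V}
    (huv : H.Adj u v) (hxy : H.Adj x y) (hvx : H.Reachable v x) :
    ∃ p q, ∃ Q : H.Walk p q, Q.IsPath ∧ s(u, v) ∈ Q.edges ∧ s(x, y) ∈ Q.edges := by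
  obtain ⟨P, hP⟩ := hvx.exists_isPath
  obtain ⟨p, Q₁, hQ₁, huvQ₁, -⟩ := hH.exists_isPath_mem_edges_of_adj_s16 huv hP
  obtain ⟨q, Q₂, hQ₂, hyxQ₂, hQ₁Q₂⟩ := hH.exists_isPath_mem_edges_of_adj_s16 hxy.symm hQ₁.reverse
  refine ⟨q, p, Q₂, hQ₂, hQ₁Q₂ ?_, Sym2.eq_swap ▸ hyxQ₂⟩
  simpa using huvQ₁

theorem IsStrongRainbowColoring.exists_isPath_deleteIncidenceSets {c : Sym2 V → ℕ}
    (hc : G.IsStrongRainbowColoring c) {W : Set V} (hW : ∀ w ∈ W, G.IsClique (G.neighborSet w))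
    {p q : V} (hp : p ∉ W) (hq : q ∉ W) :
    ∃ P : (G.deleteIncidenceSets W).Walk p q, P.IsPath ∧ (P.edges.map c).Nodup := by
  obtain ⟨R, hR, hRlen, hRc⟩ := hc p q
  have hsupp : ∀ z ∈ R.support, z ∉ W := fun z hz hzW ↦
    R.notMem_support_of_length_eq_dist hRlen (hW z hzW) (ne_of_mem_of_not_mem hzW hp)
      (ne_of_mem_of_not_mem hzW hq) hz
  have hedges : ∀ e ∈ R.edges, e ∈ (G.deleteIncidenceSets W).edgeSet := fun e he ↦
    mem_edgeSet_deleteIncidenceSets.mpr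
      ⟨R.edges_subset_edgeSet he, fun x hx ↦ hsupp x (Walk.mem_support_of_mem_edges he hx)⟩
  exact ⟨R.transfer _ hedges, hR.transfer hedges, by rwa [Walk.edges_transfer]⟩

theorem IsStrongRainbowColoring.injOn_edgeSet_deleteIncidenceSets {c : Sym2 V → ℕ}
    (hc : G.IsStrongRainbowColoring c) {W : Set V} (hW : ∀ w ∈ W, G.IsClique (G.neighborSet w))
    (hac : (G.deleteIncidenceSets W).IsAcyclic) :
    Set.InjOn c (G.deleteIncidenceSets W).edgeSet := by
  intro e₁ he₁ e₂ he₂ hce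
  induction e₁ using Sym2.ind with | _ u v =>
  induction e₂ using Sym2.ind with | _ x y =>
  obtain ⟨P₀, -, -⟩ := hc.exists_isPath_deleteIncidenceSets hW he₁.2.2 he₂.2.1
  obtain ⟨p, q, Q, hQ, huvQ, hxyQ⟩ := hac.exists_isPath_mem_edges he₁ he₂ P₀.reachable
  have hQ_nil : ¬ Q.Nil := fun h ↦ by simp [Walk.edges_eq_nil.mpr h] at huvQ
  obtain ⟨P, hP, hPc⟩ := hc.exists_isPath_deleteIncidenceSets hW
    (Q.adj_snd hQ_nil).2.1 (Q.adj_penultimate hQ_nil).2.2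
  obtain rfl : P = Q := congrArg Subtype.val ((hac.subsingleton_path p q).elim ⟨P, hP⟩ ⟨Q, hQ⟩)
  exact List.inj_on_of_nodup_map hPc huvQ hxyQ hce

section Counting

variable [Fintype V]

theorem Connected.exists_isStrongRainbowColoring_fin_src (hG : G.Connected) :
    ∃ c : Sym2 V → Fin G.src, G.IsStrongRainbowColoring fun e ↦ c e := by
  classical
  have hne : {n : ℕ | ∃ c : Sym2 V → Fin n, ∀ u v : V, ∃ p : G.Walk u v,
      p.IsPath ∧ p.length = G.dist u v ∧ (p.edges.map c).Nodup}.Nonempty := by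
    refine ⟨_, Fintype.equivFin (Sym2 V), fun u v ↦ ?_⟩
    obtain ⟨p, hp, hlen⟩ := hG.exists_path_of_dist u v
    exact ⟨p, hp, hlen, hp.isTrail.edges_nodup.map (Equiv.injective _)⟩
  obtain ⟨c, hc⟩ := Nat.sInf_mem hne
  refine ⟨c, fun u v ↦ ?_⟩
  obtain ⟨p, hp, hlen, hcp⟩ := hc u v
  exact ⟨p, hp, hlen, List.map_map (g := Fin.val) ▸ hcp.map Fin.val_injective⟩

theorem Connected.card_le_src (hG : G.Connected) {F : Finset (Sym2 V)}
    (hF : ∀ c, G.IsStrongRainbowColoring c → Set.InjOn c F) : F.card ≤ G.src := by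
  obtain ⟨c, hc⟩ := hG.exists_isStrongRainbowColoring_fin_src
  simpa using Finset.card_le_card_of_injOn c (fun e _ ↦ Finset.mem_univ (c e))
    fun e₁ he₁ e₂ he₂ h ↦ hF _ hc he₁ he₂ (congrArg Fin.val h)

theorem card_edgeFinset_le_add_sum_degree [DecidableEq V] [DecidableRel G.Adj] (W : Finset V) :
    G.edgeFinset.card ≤
      (G.edgeFinset.filter fun e ↦ ∀ x ∈ e, x ∉ W).card + ∑ w ∈ W, G.degree w := by
  rw [← Finset.card_filter_add_card_filter_not (fun e ↦ ∀ x ∈ e, x ∉ W)]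
  gcongr
  calc (G.edgeFinset.filter fun e ↦ ¬ ∀ x ∈ e, x ∉ W).card
      ≤ (W.biUnion fun w ↦ G.incidenceFinset w).card := by
        refine Finset.card_le_card fun e he ↦ ?_
        simp only [Finset.mem_filter, mem_edgeFinset, not_forall, not_not] at he
        obtain ⟨he, x, hx, hxW⟩ := he
        exact Finset.mem_biUnion.mpr ⟨x, hxW, (mem_incidenceFinset _ _ _).mpr ⟨he, hx⟩⟩
    _ ≤ ∑ w ∈ W, (G.incidenceFinset w).card := Finset.card_biUnion_le
    _ = ∑ w ∈ W, G.degree w := by simp only [card_incidenceFinset_eq_degree]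

theorem card_le_ncard_triangles [DecidableEq V] {W : Finset V}
    (hWtri : ∀ w ∈ W, ∃ a b : V, G.Adj w a ∧ G.Adj w b ∧ G.Adj a b)
    (hWsel : ∀ a b c : V, G.Adj a b → G.Adj b c → G.Adj a c →
      ∃! x : V, x ∈ ({a, b, c} : Finset V) ∧ x ∈ W) :
    W.card ≤ {S : Finset (Sym2 V) | ∃ a b c : V, G.Adj a b ∧ G.Adj b c ∧ G.Adj a c ∧
      S = {s(a, b), s(b, c), s(a, c)}}.ncard := by
  choose! A B hA hB hAB using hWtri
  rw [← Set.ncard_coe_finset]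
  refine Set.ncard_le_ncard_of_injOn (fun w ↦ {s(w, A w), s(A w, B w), s(w, B w)})
    (fun w hw ↦ ⟨w, A w, B w, hA w hw, hAB w hw, hB w hw, rfl⟩) ?_ (Set.toFinite _)
  intro w₁ hw₁ w₂ hw₂ heq
  have hw₂_mem : w₂ ∈ ({w₁, A w₁, B w₁} : Finset V) := by
    have : s(w₂, A w₂) ∈ ({s(w₁, A w₁), s(A w₁, B w₁), s(w₁, B w₁)} : Finset (Sym2 V)) := by
      simp only at heq
      rw [heq]; simp
    simp only [Finset.mem_insert, Finset.mem_singleton, Sym2.eq_iff] at this ⊢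
    tauto
  obtain ⟨x, -, hx⟩ := hWsel w₁ (A w₁) (B w₁) (hA w₁ hw₁) (hAB w₁ hw₁) (hB w₁ hw₁)
  exact (hx w₁ ⟨by simp, hw₁⟩).trans (hx w₂ ⟨hw₂_mem, hw₂⟩).symm

end Counting

end SimpleGraph

theorem stmt_16_general {V : Type*} [Fintype V] [DecidableEq V] (G : SimpleGraph V)
    [DecidableRel G.Adj] (hG : G.Connected) (t : ℕ)
    (hblocks : ∀ (a : V) (w : G.Walk a a), w.IsCycle → w.length = 3)
    (hcount : {S : Finset (Sym2 V) | ∃ a b c : V, G.Adj a b ∧ G.Adj b c ∧ G.Adj a c ∧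
      S = {s(a, b), s(b, c), s(a, c)}}.ncard = t)
    (W : Finset V)
    (hWdeg : ∀ w ∈ W, G.degree w = 2)
    (hWtri : ∀ w ∈ W, ∃ a b : V, G.Adj w a ∧ G.Adj w b ∧ G.Adj a b)
    (hWsel : ∀ a b c : V, G.Adj a b → G.Adj b c → G.Adj a c →
      ∃! x : V, x ∈ ({a, b, c} : Finset V) ∧ x ∈ W) :
    (∀ c : Sym2 V → ℕ, G.IsStrongRainbowColoring c →
      ∀ e1 ∈ G.edgeSet, ∀ e2 ∈ G.edgeSet, (∀ x ∈ e1, x ∉ W) → (∀ x ∈ e2, x ∉ W) →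
        e1 ≠ e2 → c e1 ≠ c e2) ∧
    G.edgeFinset.card - 2 * t ≤ G.src := by
  have hclique : ∀ w ∈ (W : Set V), G.IsClique (G.neighborSet w) := fun w hw ↦ by
    obtain ⟨a, b, ha, hb, hab⟩ := hWtri w hw
    exact isClique_neighborSet_of_degree_eq_two (hWdeg w hw) ha hb hab
  have hacyclic : (G.deleteIncidenceSets W).IsAcyclic := by
    refine isAcyclic_deleteIncidenceSets hblocks fun a b c hab hbc hac ↦ ?_
    obtain ⟨x, ⟨hx, hxW⟩, -⟩ := hWsel a b c hab hbc hac
    simp only [Finset.mem_insert, Finset.mem_singleton] at hx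
    rcases hx with rfl | rfl | rfl <;> simp [hxW]
  have hrainbow {c : Sym2 V → ℕ} (hc : G.IsStrongRainbowColoring c) {e₁ e₂ : Sym2 V}
      (he₁ : e₁ ∈ G.edgeSet ∧ ∀ x ∈ e₁, x ∉ W) (he₂ : e₂ ∈ G.edgeSet ∧ ∀ x ∈ e₂, x ∉ W)
      (hce : c e₁ = c e₂) : e₁ = e₂ :=
    hc.injOn_edgeSet_deleteIncidenceSets hclique hacyclic
      (mem_edgeSet_deleteIncidenceSets.mpr he₁) (mem_edgeSet_deleteIncidenceSets.mpr he₂) hce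
  refine ⟨fun c hc e₁ he₁ e₂ he₂ hW₁ hW₂ hne hce ↦ hne (hrainbow hc ⟨he₁, hW₁⟩ ⟨he₂, hW₂⟩ hce),
    ?_⟩
  have hsrc := hG.card_le_src (F := G.edgeFinset.filter fun e ↦ ∀ x ∈ e, x ∉ W)
    fun c hc e₁ he₁ e₂ he₂ ↦ hrainbow hc (by simpa using he₁) (by simpa using he₂)
  have hedges := card_edgeFinset_le_add_sum_degree (G := G) W
  rw [Finset.sum_const_nat hWdeg] at hedges
  have htri := (card_le_ncard_triangles hWtri hWsel).trans_eq hcount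
  omega

/-- Suppose `G ∈ Ḡ_t`: `G` is connected, every cycle of `G` is a triangle (so every block
is a bridge or a triangle), `G` has exactly `t` triangles, and each triangle has a vertex
of degree 2 in `G`.  Let `W` pick exactly one degree-2 vertex from each triangle, so that
the graph obtained by deleting `W` is a `D2`-tree `T_G` of `G`.  Then under any strong
rainbow coloring, the edges of `T_G` (the edges of `G` avoiding `W`) receive pairwise
distinct colors; consequently `src G ≥ m - 2t`. -/
theorem stmt_16 {V : Type*} [Fintype V] [DecidableEq V] (G : SimpleGraph V)
    [DecidableRel G.Adj] (hG : G.Connected) (t : ℕ)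
    (hblocks : ∀ (a : V) (w : G.Walk a a), w.IsCycle → w.length = 3)
    (hcount : {S : Finset (Sym2 V) | ∃ a b c : V, G.Adj a b ∧ G.Adj b c ∧ G.Adj a c ∧
      S = {s(a, b), s(b, c), s(a, c)}}.ncard = t)
    (hdeg2 : ∀ a b c : V, G.Adj a b → G.Adj b c → G.Adj a c →
      G.degree a = 2 ∨ G.degree b = 2 ∨ G.degree c = 2)
    (W : Finset V)
    (hWdeg : ∀ w ∈ W, G.degree w = 2)
    (hWtri : ∀ w ∈ W, ∃ a b : V, G.Adj w a ∧ G.Adj w b ∧ G.Adj a b)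
    (hWsel : ∀ a b c : V, G.Adj a b → G.Adj b c → G.Adj a c →
      ∃! x : V, x ∈ ({a, b, c} : Finset V) ∧ x ∈ W) :
    (∀ c : Sym2 V → ℕ, G.IsStrongRainbowColoring c →
      ∀ e1 ∈ G.edgeSet, ∀ e2 ∈ G.edgeSet, (∀ x ∈ e1, x ∉ W) → (∀ x ∈ e2, x ∉ W) →
        e1 ≠ e2 → c e1 ≠ c e2) ∧
    G.edgeFinset.card - 2 * t ≤ G.src :=
  stmt_16_general G hG t hblocks hcount W hWdeg hWtri hWsel
end

section
/- Let G be a connected cubic graph on n vertices and L(G) its line graph. Then src(L(G)) ≤ n. -/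
open SimpleGraph

/-!
Colour each edge `{e, f}` of `L(G)` by the vertex of `G` shared by `e` and `f`. The edges of a
given colour `v` all lie in the clique of `L(G)` formed by the edges of `G` at `v`, and a
geodesic meets a clique in at most one edge: if it used two of them, the first vertex of the
earlier one would be adjacent to the last vertex of the later one, giving a shortcut. So this
`|V(G)|`-colouring is strongly rainbow.
-/

namespace SimpleGraph

section Geodesic

variable {W : Type*} {H : SimpleGraph W}

lemma Walk.eq_of_adj_of_mem_support_of_length_eq_dist {a b w z : W} {h : H.Adj a b}
    {t : H.Walk b w} (hp : (Walk.cons h t).length = H.dist a w) (hz : z ∈ t.support)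
    (haz : H.Adj a z) : z = b := by
  classical
  have hshort := dist_le (Walk.cons haz (t.dropUntil z hz))
  have hsplit := congrArg Walk.length (t.take_spec hz)
  rw [Walk.length_append] at hsplit
  rw [Walk.length_cons] at hp hshort
  have htake : (t.takeUntil z hz).length = 0 := by omega
  exact (Walk.eq_of_length_eq_zero htake).symm

theorem Walk.nodup_map_edges_of_isClique {α : Type*} {c : Sym2 W → α}
    (hc : ∀ a, H.IsClique {x | ∃ s ∈ H.edgeSet, c s = a ∧ x ∈ s}) {u v : W}
    (p : H.Walk u v) (hp : p.length = H.dist u v) : (p.edges.map c).Nodup := by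
  induction p with
  | nil => simp
  | @cons a b w h t ih =>
    have ht : t.length = H.dist b w := length_eq_dist_of_subwalk hp (t.isSubwalk_cons h)
    have ha : a ∉ t.support := ((Walk.cons h t).isPath_of_length_eq_dist hp).support_nodup.notMem
    rw [Walk.edges_cons, List.map_cons, List.nodup_cons]
    refine ⟨fun hmem => ?_, ih ht⟩
    obtain ⟨d, hd, hcd⟩ := List.mem_map.mp hmem
    have hd_eq_b : ∀ z ∈ d, z = b := fun z hz =>
      have hzt : z ∈ t.support := t.mem_support_of_mem_edges hd hz
      have haz : H.Adj a z := hc (c d) ⟨s(a, b), h, hcd.symm, Sym2.mem_mk_left a b⟩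
        ⟨d, t.edges_subset_edgeSet hd, rfl, hz⟩ (ne_of_mem_of_not_mem hzt ha).symm
      eq_of_adj_of_mem_support_of_length_eq_dist hp hzt haz
    induction d using Sym2.ind with
    | _ x y =>
      have hxy := t.adj_of_mem_edges hd
      rw [hd_eq_b x (Sym2.mem_mk_left x y), hd_eq_b y (Sym2.mem_mk_right x y)] at hxy
      exact hxy.ne rfl

lemma src_le_card_of_isClique {α : Type*} [Fintype α] (hH : H.Preconnected) (c : Sym2 W → α)
    (hc : ∀ a, H.IsClique {x | ∃ s ∈ H.edgeSet, c s = a ∧ x ∈ s}) :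
    H.src ≤ Fintype.card α := by
  refine Nat.sInf_le ⟨fun s => Fintype.equivFin α (c s), fun u v => ?_⟩
  obtain ⟨p, hpath, hlen⟩ := (hH u v).exists_path_of_dist
  refine ⟨p, hpath, hlen, ?_⟩
  have := (p.nodup_map_edges_of_isClique hc hlen).map (Fintype.equivFin α).injective
  rwa [List.map_map] at this

end Geodesic

section LineGraph

variable {V : Type*} {G : SimpleGraph V}

lemma lineGraph_reachable_of_mem {e f : G.edgeSet} {v : V} (he : v ∈ (e : Sym2 V))
    (hf : v ∈ (f : Sym2 V)) : G.lineGraph.Reachable e f := by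
  rcases eq_or_ne e f with rfl | hne
  · rfl
  · exact (lineGraph_adj_iff_exists.mpr ⟨hne, v, he, hf⟩).reachable

lemma Walk.lineGraph_reachable {a b : V} (w : G.Walk a b) {e f : G.edgeSet}
    (ha : a ∈ (e : Sym2 V)) (hb : b ∈ (f : Sym2 V)) : G.lineGraph.Reachable e f := by
  induction w generalizing e with
  | nil => exact lineGraph_reachable_of_mem ha hb
  | @cons a c b h w ih =>
    exact (lineGraph_reachable_of_mem (f := ⟨s(a, c), h⟩) ha (Sym2.mem_mk_left a c)).trans
      (ih (Sym2.mem_mk_right a c) hb)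

lemma Preconnected.lineGraph (hG : G.Preconnected) : G.lineGraph.Preconnected := fun e f =>
  (hG _ _).elim fun w => w.lineGraph_reachable (e : Sym2 V).out_fst_mem (f : Sym2 V).out_fst_mem

variable (G) in
noncomputable def lineGraphCommonVertex (s : Sym2 G.edgeSet) : V :=
  @Classical.epsilon V ⟨(s.out.1 : Sym2 V).out.1⟩ fun v => ∀ e ∈ s, v ∈ (e : Sym2 V)

lemma lineGraphCommonVertex_mem {s : Sym2 G.edgeSet} (hs : s ∈ G.lineGraph.edgeSet)
    {e : G.edgeSet} (he : e ∈ s) : G.lineGraphCommonVertex s ∈ (e : Sym2 V) := by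
  induction s using Sym2.ind with
  | _ x y =>
    obtain ⟨-, v, hvx, hvy⟩ := lineGraph_adj_iff_exists.mp hs
    refine Classical.epsilon_spec (p := fun v => ∀ e ∈ s(x, y), v ∈ (e : Sym2 V)) ⟨v, ?_⟩ e he
    intro e he
    rcases Sym2.mem_iff.mp he with rfl | rfl <;> assumption

lemma isClique_lineGraphCommonVertex (v : V) :
    G.lineGraph.IsClique
      {x | ∃ s ∈ G.lineGraph.edgeSet, G.lineGraphCommonVertex s = v ∧ x ∈ s} := by
  rintro x ⟨s, hs, rfl, hx⟩ y ⟨t, ht, hts, hy⟩ hxy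
  exact lineGraph_adj_iff_exists.mpr ⟨hxy, _, lineGraphCommonVertex_mem hs hx,
    hts ▸ lineGraphCommonVertex_mem ht hy⟩

end LineGraph

end SimpleGraph

theorem stmt_17_general {V : Type*} [Fintype V] (G : SimpleGraph V) (hG : G.Connected) :
    (G.lineGraph).src ≤ Fintype.card V :=
  src_le_card_of_isClique hG.preconnected.lineGraph G.lineGraphCommonVertex
    isClique_lineGraphCommonVertex

/-- For a connected cubic graph `G` on `n` vertices, `src (L(G)) ≤ n`. -/
theorem stmt_17 {V : Type*} [Fintype V] [DecidableEq V] (G : SimpleGraph V)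
    [DecidableRel G.Adj] (hG : G.Connected) (hcubic : ∀ v : V, G.degree v = 3) :
    (G.lineGraph).src ≤ Fintype.card V :=
  stmt_17_general G hG
end
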